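/- For the Riesz cost $\ell(r)=r^{-s}$ with $s>d$, the thermodynamic limit $g_\ell(\lambda)=\inf_k k^{-d}\Gamma_\ell(\lambda,Q_k)$ satisfies the homogeneity relation $g_\ell(t\lambda)=t^{1+d/s}g_\ell(\lambda)$ for all $t>0$, $\lambda\ge 0$. Consequently its Fenchel conjugate is $f_\ell(t)=C(s,d)\,t^{1+s/d}$ for $t\ge 0$, where $C(s,d)=f_\ell(1)$. -/

import Mathlib

open scoped ENNReal BigOperators Classical Pointwise
open Filter MeasureTheory Set

noncomputable section

/-- The Riesz interaction energy `ξ(S) = ∑_{(x,y) ∈ S², x ≠ y} |x-y|^{-s}`. -/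
def xiR {d : ℕ} (s : ℝ) (S : Finset (EuclideanSpace ℝ (Fin d))) : ℝ :=
  ∑ x ∈ S, ∑ y ∈ S, if x ≠ y then dist x y ^ (-s) else 0

/-- `Γ_ℓ(λ, B) = sup {λ #S - ξ(S) : S ⊆ B finite}` for the Riesz cost `ℓ(r) = r^{-s}`. -/
def GamR {d : ℕ} (s : ℝ) (lam : ℝ) (B : Set (EuclideanSpace ℝ (Fin d))) : ℝ :=
  sSup {x : ℝ | ∃ S : Finset (EuclideanSpace ℝ (Fin d)),
    ↑S ⊆ B ∧ x = lam * S.card - xiR s S}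

/-- The half-open hypercube `Q_k = [-k/2, k/2)^d`. -/
def QcubeR (d k : ℕ) : Set (EuclideanSpace ℝ (Fin d)) :=
  {x | ∀ i, -((k : ℝ)/2) ≤ x i ∧ x i < (k : ℝ)/2}

/-- The thermodynamic limit `g_ℓ(λ) = inf_{k ≥ 1} Γ_ℓ(λ, Q_k)/k^d` for the Riesz cost. -/
def glR (d : ℕ) (s : ℝ) (lam : ℝ) : ℝ :=
  ⨅ k : ℕ+, GamR s lam (QcubeR d k) / (k : ℝ) ^ d

/-- The Fenchel conjugate `f_ℓ = g_ℓ*` for the Riesz cost. -/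
def flR (d : ℕ) (s : ℝ) (t : ℝ) : ℝ :=
  sSup {x : ℝ | ∃ lam : ℝ, x = lam * t - glR d s lam}

namespace RieszAux

abbrev E (d : ℕ) := EuclideanSpace ℝ (Fin d)

variable {d : ℕ} {s : ℝ}

/-- cube of real side length -/
def cubeR (d : ℕ) (L : ℝ) : Set (E d) := {x | ∀ i, -(L/2) ≤ x i ∧ x i < L/2}

lemma QcubeR_eq (k : ℕ) : QcubeR d k = cubeR d (k : ℝ) := rfl

def gset (d : ℕ) (s lam : ℝ) (B : Set (E d)) : Set ℝ :=
  {x : ℝ | ∃ S : Finset (E d), ↑S ⊆ B ∧ x = lam * S.card - xiR s S}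

lemma GamR_eq (lam : ℝ) (B : Set (E d)) : GamR s lam B = sSup (gset d s lam B) := rfl

lemma xiR_nonneg (S : Finset (E d)) : 0 ≤ xiR s S := by
  refine Finset.sum_nonneg fun x _ => Finset.sum_nonneg fun y _ => ?_
  split
  · exact Real.rpow_nonneg dist_nonneg _
  · exact le_refl 0
lemma zero_mem_gset (lam : ℝ) (B : Set (E d)) : (0:ℝ) ∈ gset d s lam B := by
  refine ⟨∅, by simp, by simp [xiR]⟩

lemma gset_nonempty (lam : ℝ) (B : Set (E d)) : (gset d s lam B).Nonempty :=
  ⟨0, zero_mem_gset lam B⟩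

lemma GamR_nonneg (lam : ℝ) (B : Set (E d)) : 0 ≤ GamR s lam B :=
  Real.sSup_nonneg' ⟨0, zero_mem_gset lam B, le_refl 0⟩

end RieszAux

namespace RieszAux
variable {d : ℕ} {s : ℝ}

lemma dist_le_of_mem_cube {L : ℝ} (hd : 0 < d) {x y : E d}
    (hx : x ∈ cubeR d L) (hy : y ∈ cubeR d L) : dist x y ≤ Real.sqrt d * L := by
  have hL : 0 ≤ L := by
    have h := (hx ⟨0, hd⟩).1; have h2 := (hx ⟨0, hd⟩).2; nlinarith [h.trans h2.le]
  rw [EuclideanSpace.dist_eq]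
  have hcoord : ∀ i, (x i - y i)^2 ≤ L^2 := by
    intro i
    have h1 := (hx i).1; have h2 := (hx i).2; have h3 := (hy i).1; have h4 := (hy i).2
    nlinarith
  calc Real.sqrt (∑ i, dist (x i) (y i)^2) ≤ Real.sqrt (∑ _i : Fin d, L^2) := by
        refine Real.sqrt_le_sqrt (Finset.sum_le_sum fun i _ => ?_)
        rw [Real.dist_eq, sq_abs]; exact hcoord i
    _ = Real.sqrt d * L := by
        rw [Finset.sum_const, Finset.card_univ, Fintype.card_fin, nsmul_eq_mul,
          Real.sqrt_mul (by positivity), Real.sqrt_sq hL]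

lemma xiR_lower {L : ℝ} (hd : 0 < d) (hs : 0 < s) (hL : 0 < L) {S : Finset (E d)}
    (hS : ↑S ⊆ cubeR d L) :
    (Real.sqrt d * L) ^ (-s) * (S.card * (S.card - 1)) ≤ xiR s S := by
  set c : ℝ := (Real.sqrt d * L) ^ (-s) with hc
  have hDL : 0 < Real.sqrt d * L := by
    have : (0:ℝ) < Real.sqrt d := Real.sqrt_pos.2 (by exact_mod_cast hd)
    positivity
  have hcpos : 0 < c := Real.rpow_pos_of_pos hDL _
  have key : ∀ x ∈ S, ∀ y ∈ S, x ≠ y → c ≤ dist x y ^ (-s) := by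
    intro x hx y hy hxy
    have hdpos : 0 < dist x y := dist_pos.2 hxy
    have hdle : dist x y ≤ Real.sqrt d * L := dist_le_of_mem_cube hd (hS hx) (hS hy)
    exact Real.rpow_le_rpow_of_nonpos hdpos hdle (neg_nonpos.2 hs.le)
  have : ∀ x ∈ S, c * (S.card - 1) ≤ ∑ y ∈ S, if x ≠ y then dist x y ^ (-s) else 0 := by
    intro x hx
    have : c * ((S.erase x).card : ℝ) ≤ ∑ y ∈ S.erase x, dist x y ^ (-s) := by
      rw [mul_comm, ← nsmul_eq_mul, ← Finset.sum_const]
      exact Finset.sum_le_sum fun y hy =>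
        key x hx y (Finset.mem_of_mem_erase hy) (Ne.symm (Finset.ne_of_mem_erase hy))
    rw [Finset.card_erase_of_mem hx] at this
    have hcard : ((S.card - 1 : ℕ) : ℝ) = (S.card : ℝ) - 1 := by
      have : 1 ≤ S.card := Finset.card_pos.2 ⟨x, hx⟩
      push_cast [this]; ring
    rw [hcard] at this
    refine this.trans (le_of_eq ?_)
    rw [Finset.sum_ite, Finset.sum_const_zero, add_zero, Finset.filter_ne]
  calc c * (S.card * ((S.card:ℝ) - 1)) = ∑ _x ∈ S, c * ((S.card:ℝ) - 1) := by
        rw [Finset.sum_const, nsmul_eq_mul]; ring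
    _ ≤ xiR s S := Finset.sum_le_sum this

end RieszAux

namespace RieszAux
variable {d : ℕ} {s : ℝ}

lemma bddAbove_gset {L : ℝ} (hd : 0 < d) (hs : 0 < s) (hL : 0 < L) {lam : ℝ}
    {B : Set (E d)} (hB : B ⊆ cubeR d L) : BddAbove (gset d s lam B) := by
  set c : ℝ := (Real.sqrt d * L) ^ (-s) with hc
  have hDL : 0 < Real.sqrt d * L := by
    have : (0:ℝ) < Real.sqrt d := Real.sqrt_pos.2 (by exact_mod_cast hd)
    positivity
  have hcpos : 0 < c := Real.rpow_pos_of_pos hDL _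
  refine ⟨(lam + c)^2 / (4*c), ?_⟩
  rintro x ⟨S, hSB, rfl⟩
  have hxi := xiR_lower hd hs hL (fun z hz => hB (hSB hz))
  set N : ℝ := (S.card : ℝ) with hN
  have hN0 : 0 ≤ N := by positivity
  have : lam * N - xiR s S ≤ lam * N - c * (N * (N - 1)) := by linarith
  refine this.trans ?_
  rw [le_div_iff₀ (by positivity : (0:ℝ) < 4*c)]
  nlinarith [sq_nonneg (lam + c - 2*c*N), hcpos]

lemma le_GamR {lam : ℝ} {B : Set (E d)} (hbdd : BddAbove (gset d s lam B))
    {S : Finset (E d)} (hS : ↑S ⊆ B) : lam * S.card - xiR s S ≤ GamR s lam B :=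
  le_csSup hbdd ⟨S, hS, rfl⟩

lemma GamR_le {lam M : ℝ} {B : Set (E d)}
    (h : ∀ S : Finset (E d), ↑S ⊆ B → lam * S.card - xiR s S ≤ M) :
    GamR s lam B ≤ M := by
  refine csSup_le (gset_nonempty lam B) ?_
  rintro x ⟨S, hSB, rfl⟩; exact h S hSB

lemma GamR_of_nonpos {lam : ℝ} (hlam : lam ≤ 0) (B : Set (E d)) : GamR s lam B = 0 := by
  refine le_antisymm (GamR_le fun S _ => ?_) (GamR_nonneg lam B)
  have h1 : lam * S.card ≤ 0 := mul_nonpos_of_nonpos_of_nonneg hlam (by positivity)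
  have := xiR_nonneg (s := s) S
  linarith

end RieszAux

namespace RieszAux
variable {d : ℕ} {s : ℝ}

lemma xiR_image_add (v : E d) (S : Finset (E d)) :
    xiR s (S.image (· + v)) = xiR s S := by
  have hinj : Function.Injective (fun x : E d => x + v) := add_left_injective v
  unfold xiR
  rw [Finset.sum_image (fun a _ b _ h => hinj h)]
  refine Finset.sum_congr rfl fun x _ => ?_
  rw [Finset.sum_image (fun a _ b _ h => hinj h)]
  refine Finset.sum_congr rfl fun y _ => ?_
  simp [hinj.ne_iff, dist_add_right]

lemma gset_translate (lam : ℝ) (v : E d) (B : Set (E d)) :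
    gset d s lam ((fun x => x + v) '' B) = gset d s lam B := by
  have hinj : Function.Injective (fun x : E d => x + v) := add_left_injective v
  ext x
  constructor
  · rintro ⟨S, hSB, rfl⟩
    refine ⟨S.image (· + (-v)), ?_, ?_⟩
    · intro z hz
      simp only [Finset.coe_image, Set.mem_image] at hz
      obtain ⟨w, hw, rfl⟩ := hz
      obtain ⟨b, hb, hbw⟩ := hSB hw
      have hzb : w + -v = b := by rw [← hbw]; exact add_neg_cancel_right b v
      rwa [hzb]
    · rw [Finset.card_image_of_injective _ (add_left_injective (-v)), xiR_image_add]
  · rintro ⟨S, hSB, rfl⟩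
    refine ⟨S.image (· + v), ?_, ?_⟩
    · intro z hz
      simp only [Finset.coe_image, Set.mem_image] at hz
      obtain ⟨w, hw, rfl⟩ := hz
      exact ⟨w, hSB hw, rfl⟩
    · rw [Finset.card_image_of_injective _ hinj, xiR_image_add]

lemma GamR_translate (lam : ℝ) (v : E d) (B : Set (E d)) :
    GamR s lam ((fun x => x + v) '' B) = GamR s lam B := by
  rw [GamR_eq, GamR_eq, gset_translate]

lemma xiR_image_smul {a : ℝ} (ha : 0 < a) (hs : 0 < s) (S : Finset (E d)) :
    xiR s (S.image (a • ·)) = a ^ (-s) * xiR s S := by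
  have hinj : Function.Injective (fun x : E d => a • x) :=
    smul_right_injective _ ha.ne'
  unfold xiR
  rw [Finset.sum_image (fun x _ y _ h => hinj h), Finset.mul_sum]
  refine Finset.sum_congr rfl fun x _ => ?_
  rw [Finset.sum_image (fun p _ q _ h => hinj h), Finset.mul_sum]
  refine Finset.sum_congr rfl fun y _ => ?_
  by_cases hxy : x = y
  · simp [hxy]
  · simp only [if_pos (hinj.ne_iff.mpr hxy), if_pos hxy]
    rw [dist_smul₀, Real.norm_of_nonneg ha.le,
      Real.mul_rpow ha.le dist_nonneg]

lemma smul_cubeR {a : ℝ} (ha : 0 < a) (L : ℝ) :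
    a • cubeR d L = cubeR d (a * L) := by
  ext x
  rw [Set.mem_smul_set_iff_inv_smul_mem₀ ha.ne']
  have hxi : ∀ i, (a⁻¹ • x) i = a⁻¹ * x i := fun i => rfl
  constructor
  · intro h i
    have h1 := (h i).1; have h2 := (h i).2
    rw [hxi] at h1 h2
    constructor
    · have := mul_le_mul_of_nonneg_left h1 ha.le
      rw [mul_neg, ← mul_assoc, mul_inv_cancel₀ ha.ne', one_mul] at this
      calc -(a*L/2) = -(a*(L/2)) := by ring
        _ ≤ x i := this
    · have := mul_lt_mul_of_pos_left h2 ha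
      rw [← mul_assoc, mul_inv_cancel₀ ha.ne', one_mul] at this
      calc x i < a * (L/2) := this
        _ = a*L/2 := by ring
  · intro h i
    have h1 := (h i).1; have h2 := (h i).2
    rw [hxi]
    constructor
    · calc -(L/2) = a⁻¹ * -(a*L/2) := by field_simp
        _ ≤ a⁻¹ * x i := mul_le_mul_of_nonneg_left h1 (inv_nonneg.2 ha.le)
    · calc a⁻¹ * x i < a⁻¹ * (a*L/2) := by
            exact mul_lt_mul_of_pos_left h2 (inv_pos.2 ha)
        _ = L/2 := by field_simp

end RieszAux

namespace RieszAux
variable {d : ℕ} {s : ℝ}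

lemma gset_scale {t : ℝ} (ht : 0 < t) (hs : 0 < s) (lam : ℝ) (B : Set (E d)) :
    gset d s (t * lam) B = t • gset d s lam ((t ^ s⁻¹ : ℝ) • B) := by
  set a : ℝ := t ^ s⁻¹ with ha
  have hapos : 0 < a := Real.rpow_pos_of_pos ht _
  have hans : a ^ (-s) = t⁻¹ := by
    rw [ha, ← Real.rpow_mul ht.le, show s⁻¹ * -s = -1 by field_simp, Real.rpow_neg_one]
  have hains : a⁻¹ ^ (-s) = t := by
    rw [ha, ← Real.rpow_neg_one (t ^ s⁻¹), ← Real.rpow_mul ht.le, ← Real.rpow_mul ht.le,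
      show s⁻¹ * -1 * -s = 1 by field_simp, Real.rpow_one]
  ext x
  constructor
  · rintro ⟨S, hSB, rfl⟩
    refine ⟨lam * (S.image (a • ·)).card - xiR s (S.image (a • ·)), ⟨S.image (a • ·), ?_, rfl⟩, ?_⟩
    · intro z hz
      simp only [Finset.coe_image, Set.mem_image] at hz
      obtain ⟨w, hw, rfl⟩ := hz
      exact Set.smul_mem_smul_set (hSB hw)
    · have hinj : Function.Injective (fun x : E d => a • x) :=
        smul_right_injective _ hapos.ne'
      rw [Finset.card_image_of_injective _ hinj, xiR_image_smul hapos hs, hans]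
      simp only [smul_eq_mul]
      field_simp
  · rintro ⟨y, ⟨T, hTB, rfl⟩, rfl⟩
    refine ⟨T.image (a⁻¹ • ·), ?_, ?_⟩
    · intro z hz
      simp only [Finset.coe_image, Set.mem_image] at hz
      obtain ⟨w, hw, rfl⟩ := hz
      obtain ⟨b, hb, rfl⟩ := hTB hw
      rwa [inv_smul_smul₀ hapos.ne']
    · have hinj : Function.Injective (fun x : E d => a⁻¹ • x) :=
        smul_right_injective _ (inv_pos.2 hapos).ne'
      rw [Finset.card_image_of_injective _ hinj, xiR_image_smul (inv_pos.2 hapos) hs, hains]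
      simp only [smul_eq_mul]
      ring

lemma GamR_scale {t : ℝ} (ht : 0 < t) (hs : 0 < s) (lam : ℝ) (B : Set (E d)) :
    GamR s (t * lam) B = t * GamR s lam ((t ^ s⁻¹ : ℝ) • B) := by
  rw [GamR_eq, GamR_eq, gset_scale ht hs, Real.sSup_smul_of_nonneg ht.le, smul_eq_mul]

lemma GamR_scale_cube {t : ℝ} (ht : 0 < t) (hs : 0 < s) (lam L : ℝ) :
    GamR s (t * lam) (cubeR d L) = t * GamR s lam (cubeR d (t ^ s⁻¹ * L)) := by
  rw [GamR_scale ht hs, smul_cubeR (Real.rpow_pos_of_pos ht _)]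

end RieszAux

namespace RieszAux
variable {d : ℕ} {s : ℝ}

lemma GamR_cube_le (hd : 0 < d) (hs : 0 < s) {lam : ℝ} (hlam : 0 ≤ lam)
    {L c : ℝ} (hL : 0 < L) (hc : 0 < c) :
    GamR s lam (cubeR d L) ≤ (L/c + 3)^d * GamR s lam (cubeR d c) := by
  set Γc := GamR s lam (cubeR d c) with hΓc
  have hΓc0 : 0 ≤ Γc := GamR_nonneg _ _
  have hbddc : BddAbove (gset d s lam (cubeR d c)) := bddAbove_gset hd hs hc subset_rfl
  refine GamR_le fun S hS => ?_
  classical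
  set φ : E d → (Fin d → ℤ) := fun x i => ⌊x i / c + 1/2⌋ with hφ
  set M : ℤ := ⌊L/(2*c) + 1/2⌋ with hM
  have hMle : (M : ℝ) ≤ L/(2*c) + 1/2 := Int.floor_le _
  have hMgt : L/(2*c) + 1/2 < (M : ℝ) + 1 := Int.lt_floor_add_one _
  have hM0 : 0 ≤ M := Int.le_floor.2 (by push_cast; positivity)
  set box : Finset (Fin d → ℤ) := Fintype.piFinset (fun _ => Finset.Icc (-M-1) M) with hbox
  have hmem : ∀ x ∈ S, φ x ∈ box := by
    intro x hx
    rw [hbox, Fintype.mem_piFinset]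
    intro i
    have h1 := (hS hx i).1
    have h2 := (hS hx i).2
    rw [Finset.mem_Icc]
    have key1 : (-L/2)/c ≤ x i / c := (div_le_div_iff_of_pos_right hc).mpr (by linarith)
    have key2 : x i / c ≤ (L/2)/c := (div_le_div_iff_of_pos_right hc).mpr h2.le
    have e1 : (-L/2)/c = -(L/(2*c)) := by ring
    have e2 : (L/2)/c = L/(2*c) := by ring
    rw [e1] at key1
    rw [e2] at key2
    constructor
    · refine Int.le_floor.2 ?_
      push_cast
      linarith
    · have : (⌊x i / c + 1/2⌋ : ℤ) ≤ ⌊L/(2*c) + 1/2⌋ :=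
        Int.floor_le_floor (by linarith)
      exact this
  set Sv : (Fin d → ℤ) → Finset (E d) := fun v => S.filter (fun x => φ x = v) with hSv
  -- cardinality splits
  have hcard : (S.card : ℝ) = ∑ v ∈ box, ((Sv v).card : ℝ) := by
    rw [Finset.card_eq_sum_card_fiberwise hmem]
    push_cast
    rfl
  -- energy superadditivity
  have henergy : ∑ v ∈ box, xiR s (Sv v) ≤ xiR s S := by
    have heq : ∑ v ∈ box, xiR s (Sv v)
        = ∑ x ∈ S, ∑ y ∈ S.filter (fun z => φ z = φ x),
            (if x ≠ y then dist x y ^ (-s) else 0) := by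
      rw [← Finset.sum_fiberwise_of_maps_to hmem
        (fun x => ∑ y ∈ S.filter (fun z => φ z = φ x),
          (if x ≠ y then dist x y ^ (-s) else 0))]
      refine Finset.sum_congr rfl fun v _ => ?_
      refine Finset.sum_congr rfl fun x hx => ?_
      have hxv : φ x = v := (Finset.mem_filter.1 hx).2
      rw [hxv]
    rw [heq]
    unfold xiR
    refine Finset.sum_le_sum fun x _ => ?_
    refine Finset.sum_le_sum_of_subset_of_nonneg (Finset.filter_subset _ _) ?_
    intro y _ _
    split
    · exact Real.rpow_nonneg dist_nonneg _
    · exact le_refl 0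
  -- per-cell bound
  have hcell : ∀ v ∈ box, lam * ((Sv v).card : ℝ) - xiR s (Sv v) ≤ Γc := by
    intro v _
    set w : E d := WithLp.toLp 2 (fun i => c * (v i : ℝ)) with hw
    have hsub : ↑(Sv v) ⊆ (fun x => x + w) '' cubeR d c := by
      intro x hx
      rw [hSv, Finset.coe_filter] at hx
      obtain ⟨hxS, hxv⟩ := hx
      refine ⟨x - w, ?_, sub_add_cancel x w⟩
      intro i
      have : ⌊x i / c + 1/2⌋ = v i := congrFun hxv i
      have h1 : ((v i : ℝ)) ≤ x i / c + 1/2 := by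
        rw [← this]; exact Int.floor_le _
      have h2 : x i / c + 1/2 < (v i : ℝ) + 1 := by
        rw [← this]; exact Int.lt_floor_add_one _
      have hxw : (x - w) i = x i - c * (v i : ℝ) := rfl
      rw [hxw]
      have hb1 : (v i : ℝ) * c ≤ x i + c/2 := by
        have := mul_le_mul_of_nonneg_right h1 hc.le
        rw [add_mul, div_mul_cancel₀ _ hc.ne'] at this
        linarith
      have hb2 : x i + c/2 < ((v i : ℝ) + 1) * c := by
        have := mul_lt_mul_of_pos_right h2 hc
        rw [add_mul, div_mul_cancel₀ _ hc.ne'] at this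
        linarith
      constructor
      · nlinarith
      · nlinarith
    have hbdd' : BddAbove (gset d s lam ((fun x => x + w) '' cubeR d c)) := by
      rw [gset_translate]; exact hbddc
    have := le_GamR hbdd' hsub
    rwa [GamR_translate] at this
  -- counting
  have hboxcard : (box.card : ℝ) ≤ (L/c + 3)^d := by
    have h1 : box.card = ((2*M+2).toNat)^d := by
      rw [hbox, Fintype.card_piFinset]
      simp only [Int.card_Icc]
      rw [Finset.prod_const, Finset.card_univ, Fintype.card_fin]
      congr 1
      congr 1
      ring
    rw [h1]
    have h2 : (((2*M+2).toNat : ℕ) : ℝ) = 2*(M:ℝ)+2 := by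
      rw [← Int.cast_natCast, Int.toNat_of_nonneg (by linarith)]
      push_cast; ring
    rw [Nat.cast_pow, h2]
    refine pow_le_pow_left₀ (by positivity) ?_ d
    have : 2*(M:ℝ) ≤ L/c + 1 := by
      rw [show L/c = 2*(L/(2*c)) by ring]
      linarith
    linarith
  -- combine
  calc lam * S.card - xiR s S
      ≤ ∑ v ∈ box, (lam * ((Sv v).card : ℝ) - xiR s (Sv v)) := by
        rw [Finset.sum_sub_distrib, ← Finset.mul_sum, ← hcard]
        linarith
    _ ≤ ∑ _v ∈ box, Γc := Finset.sum_le_sum hcell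
    _ = (box.card : ℝ) * Γc := by rw [Finset.sum_const, nsmul_eq_mul]
    _ ≤ (L/c + 3)^d * Γc := mul_le_mul_of_nonneg_right hboxcard hΓc0


end RieszAux

namespace RieszAux
variable {d : ℕ} {s : ℝ}

def hfun (d : ℕ) (s lam L : ℝ) : ℝ := GamR s lam (cubeR d L) / L^d

lemma glR_eq_hfun (lam : ℝ) : glR d s lam = ⨅ k : ℕ+, hfun d s lam ((k:ℕ):ℝ) := rfl

lemma hfun_nonneg (lam : ℝ) {L : ℝ} (hL : 0 < L) : 0 ≤ hfun d s lam L :=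
  div_nonneg (GamR_nonneg _ _) (by positivity)

lemma hfun_le (hd : 0 < d) (hs : 0 < s) {lam : ℝ} (hlam : 0 ≤ lam)
    {L c : ℝ} (hL : 0 < L) (hc : 0 < c) :
    hfun d s lam L ≤ ((L + 3*c)/L)^d * hfun d s lam c := by
  have h := GamR_cube_le hd hs hlam hL hc (lam := lam)
  have heq : ((L + 3*c)/L)^d * hfun d s lam c
      = ((L/c + 3)^d * GamR s lam (cubeR d c)) / L^d := by
    rw [hfun, show L/c + 3 = (L + 3*c)/c by field_simp, div_pow, div_pow]
    ring
  rw [hfun, heq]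
  exact (div_le_div_iff_of_pos_right (by positivity)).mpr h

lemma bddBelow_hfun (lam : ℝ) (f : ℕ+ → ℝ) (hf : ∀ k, 0 < f k) :
    BddBelow (Set.range fun k : ℕ+ => hfun d s lam (f k)) := by
  refine ⟨0, ?_⟩
  rintro x ⟨k, rfl⟩
  exact hfun_nonneg lam (hf k)

lemma glR_nonneg (lam : ℝ) : 0 ≤ glR d s lam := by
  rw [glR_eq_hfun]
  refine le_ciInf fun k => hfun_nonneg lam (by exact_mod_cast k.pos)

lemma glR_le_hfun (hd : 0 < d) (hs : 0 < s) {lam : ℝ} (hlam : 0 ≤ lam)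
    {L : ℝ} (hL : 0 < L) : glR d s lam ≤ hfun d s lam L := by
  have hbdd : BddBelow (Set.range fun k : ℕ+ => hfun d s lam ((k:ℕ):ℝ)) := by
    refine ⟨0, ?_⟩; rintro x ⟨k, rfl⟩
    exact hfun_nonneg lam (by exact_mod_cast k.pos)
  have hev : ∀ᶠ n : ℕ in atTop, glR d s lam ≤ (1 + 3*L/(n:ℝ))^d * hfun d s lam L := by
    filter_upwards [eventually_ge_atTop 1] with n hn
    have hn0 : (0:ℝ) < (n:ℝ) := by exact_mod_cast hn
    have h1 : glR d s lam ≤ hfun d s lam ((n:ℝ)) := by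
      rw [glR_eq_hfun]
      exact ciInf_le hbdd (⟨n, hn⟩ : ℕ+)
    have h2 : hfun d s lam ((n:ℝ)) ≤ (((n:ℝ) + 3*L)/(n:ℝ))^d * hfun d s lam L :=
      hfun_le hd hs hlam hn0 hL
    have h3 : ((n:ℝ) + 3*L)/(n:ℝ) = 1 + 3*L/(n:ℝ) := by field_simp
    rw [h3] at h2
    exact h1.trans h2
  have htend : Tendsto (fun n : ℕ => (1 + 3*L/(n:ℝ))^d * hfun d s lam L)
      atTop (nhds ((1 + 0)^d * hfun d s lam L)) := by
    refine Tendsto.mul_const _ (Tendsto.pow ?_ d)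
    exact tendsto_const_nhds.add (tendsto_const_div_atTop_nhds_zero_nat (3*L))
  have := ge_of_tendsto htend hev
  simpa using this

lemma iInf_hfun_scaled (hd : 0 < d) (hs : 0 < s) {lam : ℝ} (hlam : 0 ≤ lam)
    {a : ℝ} (ha : 0 < a) :
    ⨅ k : ℕ+, hfun d s lam (a * ((k:ℕ):ℝ)) = glR d s lam := by
  have hbdd : BddBelow (Set.range fun k : ℕ+ => hfun d s lam (a * ((k:ℕ):ℝ))) := by
    refine ⟨0, ?_⟩; rintro x ⟨k, rfl⟩
    refine hfun_nonneg lam ?_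
    have : (0:ℝ) < (k:ℕ) := by exact_mod_cast k.pos
    positivity
  refine le_antisymm ?_ ?_
  · rw [glR_eq_hfun]
    refine le_ciInf fun j => ?_
    have hj0 : (0:ℝ) < ((j:ℕ):ℝ) := by exact_mod_cast j.pos
    have hev : ∀ᶠ n : ℕ in atTop,
        (⨅ k : ℕ+, hfun d s lam (a * ((k:ℕ):ℝ)))
          ≤ (1 + (3*((j:ℕ):ℝ)/a)/(n:ℝ))^d * hfun d s lam ((j:ℕ):ℝ) := by
      filter_upwards [eventually_ge_atTop 1] with n hn
      have hn0 : (0:ℝ) < (n:ℝ) := by exact_mod_cast hn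
      have h1 : (⨅ k : ℕ+, hfun d s lam (a * ((k:ℕ):ℝ))) ≤ hfun d s lam (a * (n:ℝ)) :=
        ciInf_le hbdd (⟨n, hn⟩ : ℕ+)
      have h2 : hfun d s lam (a * (n:ℝ))
          ≤ ((a*(n:ℝ) + 3*((j:ℕ):ℝ))/(a*(n:ℝ)))^d * hfun d s lam ((j:ℕ):ℝ) :=
        hfun_le hd hs hlam (by positivity) hj0
      have h3 : (a*(n:ℝ) + 3*((j:ℕ):ℝ))/(a*(n:ℝ)) = 1 + (3*((j:ℕ):ℝ)/a)/(n:ℝ) := by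
        field_simp
      rw [h3] at h2
      exact h1.trans h2
    have htend : Tendsto (fun n : ℕ => (1 + (3*((j:ℕ):ℝ)/a)/(n:ℝ))^d * hfun d s lam ((j:ℕ):ℝ))
        atTop (nhds ((1 + 0)^d * hfun d s lam ((j:ℕ):ℝ))) := by
      refine Tendsto.mul_const _ (Tendsto.pow ?_ d)
      exact tendsto_const_nhds.add (tendsto_const_div_atTop_nhds_zero_nat _)
    have := ge_of_tendsto htend hev
    simpa using this
  · refine le_ciInf fun k => ?_
    refine glR_le_hfun hd hs hlam ?_
    have : (0:ℝ) < ((k:ℕ):ℝ) := by exact_mod_cast k.pos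
    positivity

lemma glR_homog (hd : 0 < d) (hs0 : 0 < s) {t lam : ℝ} (ht : 0 < t) (hlam : 0 ≤ lam) :
    glR d s (t * lam) = t ^ (1 + (d:ℝ)/s) * glR d s lam := by
  set a : ℝ := t ^ s⁻¹ with ha
  have hapos : 0 < a := Real.rpow_pos_of_pos ht _
  have step1 : glR d s (t * lam) = ⨅ k : ℕ+, (t * a^d) * hfun d s lam (a * ((k:ℕ):ℝ)) := by
    rw [glR_eq_hfun]
    refine iInf_congr fun k => ?_
    have hk0 : (0:ℝ) < ((k:ℕ):ℝ) := by exact_mod_cast k.pos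
    rw [hfun, hfun, GamR_scale_cube ht hs0, ← ha]
    rw [mul_pow]
    field_simp
  rw [step1, ← Real.mul_iInf_of_nonneg (by positivity), iInf_hfun_scaled hd hs0 hlam hapos]
  congr 1
  rw [ha, ← Real.rpow_natCast (t ^ s⁻¹) d, ← Real.rpow_mul ht.le]
  rw [show (1 : ℝ) + (d:ℝ)/s = 1 + s⁻¹ * (d:ℝ) by ring]
  rw [Real.rpow_add ht, Real.rpow_one]

end RieszAux

namespace RieszAux
variable {d : ℕ} {s : ℝ}

lemma glR_nonpos_eq_zero {lam : ℝ} (hlam : lam ≤ 0) : glR d s lam = 0 := by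
  rw [glR]
  have : ∀ k : ℕ+, GamR s lam (QcubeR d k) / (k:ℝ)^d = 0 := by
    intro k
    rw [QcubeR_eq, GamR_of_nonpos hlam, zero_div]
  simp only [this]
  exact ciInf_const

def fset (d : ℕ) (s t : ℝ) : Set ℝ := {x : ℝ | ∃ lam : ℝ, x = lam * t - glR d s lam}

lemma flR_eq (t : ℝ) : flR d s t = sSup (fset d s t) := rfl

lemma fset_scale (hd : 0 < d) (hs : (d:ℝ) < s) {t : ℝ} (ht : 0 < t) :
    fset d s t = (t ^ (1 + s/(d:ℝ))) • fset d s 1 := by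
  have hd0 : (0:ℝ) < (d:ℝ) := by exact_mod_cast hd
  have hs0 : 0 < s := hd0.trans hs
  set τ : ℝ := t ^ (s/(d:ℝ)) with hτ
  have hτpos : 0 < τ := Real.rpow_pos_of_pos ht _
  have hτt : τ * t = t ^ (1 + s/(d:ℝ)) := by
    rw [Real.rpow_add ht, Real.rpow_one, hτ]; ring
  have hτp : τ ^ (1 + (d:ℝ)/s) = t ^ (1 + s/(d:ℝ)) := by
    rw [hτ, ← Real.rpow_mul ht.le]
    congr 1
    field_simp
    ring
  have key : ∀ μ : ℝ, (τ * μ) * t - glR d s (τ * μ)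
      = t ^ (1 + s/(d:ℝ)) * (μ * 1 - glR d s μ) := by
    intro μ
    rcases le_or_gt 0 μ with hμ | hμ
    · rw [glR_homog hd hs0 hτpos hμ, hτp, ← hτt]
      ring
    · have h1 : τ * μ ≤ 0 := by nlinarith
      rw [glR_nonpos_eq_zero h1, glR_nonpos_eq_zero hμ.le, ← hτt]
      ring
  ext x
  constructor
  · rintro ⟨lam, rfl⟩
    refine ⟨τ⁻¹ * lam * 1 - glR d s (τ⁻¹ * lam), ⟨τ⁻¹ * lam, rfl⟩, ?_⟩
    simp only [smul_eq_mul]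
    rw [← key]
    rw [show τ * (τ⁻¹ * lam) = lam by field_simp]
  · intro hx
    rw [Set.mem_smul_set] at hx
    obtain ⟨y, ⟨μ, rfl⟩, rfl⟩ := hx
    refine ⟨τ * μ, ?_⟩
    rw [smul_eq_mul, key]

lemma flR_zero (hd : 0 < d) : flR d s 0 = 0 := by
  rw [flR_eq]
  refine le_antisymm ?_ (Real.sSup_nonneg' ⟨0, ⟨0, by simp [glR_nonpos_eq_zero le_rfl]⟩, le_rfl⟩)
  refine csSup_le ⟨0, 0, by simp [glR_nonpos_eq_zero le_rfl]⟩ ?_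
  rintro x ⟨lam, rfl⟩
  have := glR_nonneg (d := d) (s := s) lam
  simp only [mul_zero, zero_sub]
  linarith

end RieszAux


/-- For the Riesz cost `ℓ(r) = r^{-s}` with `s > d`: homogeneity
`g_ℓ(t λ) = t^{1+d/s} g_ℓ(λ)` for `t > 0`, `λ ≥ 0`, and consequently
`f_ℓ(t) = C(s,d) t^{1+s/d}` with `C(s,d) = f_ℓ(1)`. -/
theorem glR_homogeneous_flR_power {d : ℕ} (hd : 0 < d) (s : ℝ) (hs : (d : ℝ) < s) :
    (∀ t > (0:ℝ), ∀ lam : ℝ, 0 ≤ lam →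
      glR d s (t * lam) = t ^ (1 + (d : ℝ)/s) * glR d s lam) ∧
    (∀ t : ℝ, 0 ≤ t → flR d s t = flR d s 1 * t ^ (1 + s/(d : ℝ))) := by
  have hd0 : (0:ℝ) < (d:ℝ) := by exact_mod_cast hd
  have hs0 : 0 < s := hd0.trans hs
  constructor
  · intro t ht lam hlam
    exact RieszAux.glR_homog hd hs0 ht hlam
  · intro t ht
    rcases eq_or_lt_of_le ht with rfl | htpos
    · rw [RieszAux.flR_zero hd, Real.zero_rpow (show (1 + s/(d:ℝ)) ≠ 0 by positivity), mul_zero]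
    · rw [RieszAux.flR_eq, RieszAux.flR_eq, RieszAux.fset_scale hd hs htpos,
        Real.sSup_smul_of_nonneg (by positivity) _, smul_eq_mul, mul_comm]
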